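/- arXiv:math/0608251 — 3 statements merged into one kernel-verified Lean document; each statement's English description precedes it below -/
import Mathlib

section
/- Let (X, ℬ, μ) be a probability space, T : X → X a measure-preserving transformation, f ∈ L¹(μ), and λ : X → ℝ a T-invariant measurable function (λ∘T = λ a.e.) whose positive part λ⁺ is integrable. Then ∫_{{f* > λ}} (f − λ) dμ ≥ 0, where f* = sup_{N≥1} max_{1≤k≤N} A_k f is the maximal function of f. -/
/-!
Garsia's argument. Let `S_n` be the Birkhoff sums of `g` and `M_N = max_{0 ≤ n ≤ N} S_n`
(`birkhoffSumMax`). Since `S_{n+1} = g + S_n ∘ T`, one has `M_N ≤ (g + M_N ∘ T)⁺`, so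
`g ≥ M_N - M_N ∘ T` on `{M_N > 0}`; as `M_N ≥ 0` and `T` preserves `μ`, integrating gives
`∫_{M_N > 0} g ≥ 0`, and `N → ∞` gives `∫_{∃ n, S_n > 0} g ≥ 0`.
If `c` is integrable and invariant, `S_n (f - c) = S_n f - n c` a.e., so with `g = f - c` this set
is `{f* > c}`. For general `λ`, take `c = max λ (-M) ≥ λ`: this only enlarges `(c - f)⁺` and
shrinks `(f - c)⁺`, and the sets `{f* > max λ (-M)}` increase to `{f* > λ}`.
-/

open MeasureTheory Filter Set

section MaximalInequality

variable {X : Type*} {T : X → X} {g : X → ℝ}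

noncomputable def birkhoffSumMax (T : X → X) (g : X → ℝ) : ℕ → X → ℝ
  | 0 => fun _ => 0
  | N + 1 => fun x => max (birkhoffSumMax T g N x) (birkhoffSum T g (N + 1) x)

lemma birkhoffSumMax_nonneg : ∀ N x, 0 ≤ birkhoffSumMax T g N x
  | 0, _ => le_rfl
  | N + 1, x => (birkhoffSumMax_nonneg N x).trans (le_max_left _ _)

lemma birkhoffSumMax_le_succ (N : ℕ) (x : X) :
    birkhoffSumMax T g N x ≤ birkhoffSumMax T g (N + 1) x :=
  le_max_left _ _

lemma birkhoffSum_le_birkhoffSumMax : ∀ N x, birkhoffSum T g N x ≤ birkhoffSumMax T g N x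
  | 0, x => by simp [birkhoffSumMax]
  | _ + 1, _ => le_max_right _ _

lemma birkhoffSumMax_pos_iff {x : X} :
    ∀ {N}, 0 < birkhoffSumMax T g N x ↔ ∃ n ≤ N, 0 < birkhoffSum T g n x
  | 0 => by simp [birkhoffSumMax]
  | N + 1 => by
    simp only [birkhoffSumMax, lt_max_iff, birkhoffSumMax_pos_iff, Nat.le_succ_iff]
    grind

lemma birkhoffSumMax_le_max_zero_add :
    ∀ N x, birkhoffSumMax T g N x ≤ max 0 (g x + birkhoffSumMax T g N (T x))
  | 0, _ => le_max_left _ _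
  | N + 1, x => by
    have hN := birkhoffSumMax_le_succ (T := T) (g := g) N (T x)
    refine max_le ((birkhoffSumMax_le_max_zero_add N x).trans (by gcongr)) ?_
    rw [birkhoffSum_succ']
    exact le_max_of_le_right (by gcongr; exact (birkhoffSum_le_birkhoffSumMax N (T x)).trans hN)

lemma birkhoffSumMax_sub_comp_le_of_pos {N : ℕ} {x : X} (hx : 0 < birkhoffSumMax T g N x) :
    birkhoffSumMax T g N x - birkhoffSumMax T g N (T x) ≤ g x := by
  have key := birkhoffSumMax_le_max_zero_add (T := T) (g := g) N x
  rw [max_eq_right (by by_contra! h; exact hx.not_ge (key.trans (max_le le_rfl h.le)))] at key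
  linarith

variable [MeasurableSpace X] {μ : Measure X}

lemma MeasureTheory.Integrable.birkhoffSum (hT : MeasurePreserving T μ μ) (hg : Integrable g μ)
    (n : ℕ) : Integrable (birkhoffSum T g n) μ := by
  unfold _root_.birkhoffSum
  exact integrable_finsetSum _ fun j _ => (hT.iterate j).integrable_comp_of_integrable hg

lemma MeasureTheory.Integrable.birkhoffSumMax (hT : MeasurePreserving T μ μ)
    (hg : Integrable g μ) : ∀ N, Integrable (birkhoffSumMax T g N) μ
  | 0 => integrable_zero _ _ _
  | N + 1 => (hg.birkhoffSumMax hT N).sup (hg.birkhoffSum hT (N + 1))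

lemma setIntegral_birkhoffSumMax_pos_nonneg (hT : MeasurePreserving T μ μ) (hg : Integrable g μ)
    (N : ℕ) : 0 ≤ ∫ x in {x | 0 < birkhoffSumMax T g N x}, g x ∂μ := by
  set M := birkhoffSumMax T g N
  set E := {x | 0 < M x}
  have hM : Integrable M μ := hg.birkhoffSumMax hT N
  have hMT : Integrable (fun x => M (T x)) μ := hT.integrable_comp_of_integrable hM
  have hE : NullMeasurableSet E μ := aestronglyMeasurable_const.nullMeasurableSet_lt hM.1
  have h_int_M : ∫ x in E, M x ∂μ = ∫ x, M x ∂μ :=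
    setIntegral_eq_integral_of_forall_compl_eq_zero fun x hx =>
      le_antisymm (not_lt.mp hx) (birkhoffSumMax_nonneg N x)
  have h_int_MT : ∫ x in E, M (T x) ∂μ ≤ ∫ x, M x ∂μ := by
    calc ∫ x in E, M (T x) ∂μ ≤ ∫ x, M (T x) ∂μ :=
          setIntegral_le_integral hMT (ae_of_all _ fun x => birkhoffSumMax_nonneg N (T x))
      _ = ∫ x, M x ∂μ := by
          rw [← integral_map hT.aemeasurable (hT.map_eq.symm ▸ hM.1), hT.map_eq]
  have h_mono : ∫ x in E, (M x - M (T x)) ∂μ ≤ ∫ x in E, g x ∂μ :=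
    setIntegral_mono_ae_restrict (hM.sub hMT).integrableOn hg.integrableOn <|
      (ae_restrict_iff'₀ hE).mpr (ae_of_all _ fun _ => birkhoffSumMax_sub_comp_le_of_pos)
  rw [integral_sub hM.integrableOn hMT.integrableOn] at h_mono
  linarith

theorem setIntegral_exists_birkhoffSum_pos_nonneg (hT : MeasurePreserving T μ μ)
    (hg : Integrable g μ) : 0 ≤ ∫ x in {x | ∃ n, 0 < birkhoffSum T g n x}, g x ∂μ := by
  set E : ℕ → Set X := fun N => {x | 0 < birkhoffSumMax T g N x}
  have hE : ∀ N, NullMeasurableSet (E N) μ := fun N =>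
    aestronglyMeasurable_const.nullMeasurableSet_lt (hg.birkhoffSumMax hT N).1
  have hE_mono : Monotone E := monotone_nat_of_le_succ fun N _ hx =>
    hx.trans_le (birkhoffSumMax_le_succ N _)
  have hE_iUnion : ⋃ N, E N = {x | ∃ n, 0 < birkhoffSum T g n x} := by
    ext x
    simp only [E, mem_iUnion, mem_ofPred, birkhoffSumMax_pos_iff]
    exact ⟨fun ⟨_, n, _, hn⟩ => ⟨n, hn⟩, fun ⟨n, hn⟩ => ⟨n, n, le_rfl, hn⟩⟩
  rw [← hE_iUnion]
  exact ge_of_tendsto (tendsto_setIntegral_of_monotone₀ hE hE_mono hg.integrableOn)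
    (Eventually.of_forall (setIntegral_birkhoffSumMax_pos_nonneg hT hg))

end MaximalInequality

section Invariant

variable {X : Type*} {T : X → X}

lemma lt_birkhoffAverage_iff {f : X → ℝ} {k : ℕ} (hk : 0 < k) {a : ℝ} {x : X} :
    a < birkhoffAverage ℝ T f k x ↔ k * a < birkhoffSum T f k x := by
  rw [birkhoffAverage, smul_eq_mul, lt_inv_mul_iff₀ (by exact_mod_cast hk)]

variable [MeasurableSpace X] {μ : Measure X}

lemma birkhoffSum_ae_eq_nsmul_of_comp_ae_eq {M : Type*} [AddCommMonoid M] {c : X → M}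
    (hT : Measure.QuasiMeasurePreserving T μ μ) (hc : c ∘ T =ᵐ[μ] c) (n : ℕ) :
    birkhoffSum T c n =ᵐ[μ] n • c := by
  have h_iter : ∀ j, c ∘ T^[j] =ᵐ[μ] c := by
    intro j
    induction j with
    | zero => rfl
    | succ j ih =>
      rw [Function.iterate_succ']
      exact ((hT.iterate j).ae_eq hc).trans ih
  filter_upwards [ae_all_iff.2 h_iter] with x hx
  simp only [Function.comp_apply] at hx
  simp [birkhoffSum, hx]

lemma setOf_exists_birkhoffSum_sub_pos_ae_eq {f c : X → ℝ}
    (hT : Measure.QuasiMeasurePreserving T μ μ) (hc : c ∘ T =ᵐ[μ] c) :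
    {x | ∃ n, 0 < birkhoffSum T (f - c) n x}
      =ᵐ[μ] {x | ∃ k, 1 ≤ k ∧ c x < birkhoffAverage ℝ T f k x} := by
  rw [eventuallyEq_set]
  filter_upwards [ae_all_iff.2 (birkhoffSum_ae_eq_nsmul_of_comp_ae_eq hT hc)] with x hx
  have h_sum : ∀ n, birkhoffSum T (f - c) n x = birkhoffSum T f n x - n * c x := fun n => by
    rw [birkhoffSum_sub, hx n, Pi.smul_apply, nsmul_eq_mul]
  simp only [h_sum, sub_pos]
  refine exists_congr fun n => ?_
  rcases Nat.eq_zero_or_pos n with rfl | hn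
  · simp
  · simp [Nat.one_le_iff_ne_zero.mpr hn.ne', lt_birkhoffAverage_iff hn]

theorem setIntegral_sub_nonneg_of_comp_ae_eq (hT : MeasurePreserving T μ μ) {f c : X → ℝ}
    (hf : Integrable f μ) (hc : Integrable c μ) (hcT : c ∘ T =ᵐ[μ] c) :
    0 ≤ ∫ x in {x | ∃ k, 1 ≤ k ∧ c x < birkhoffAverage ℝ T f k x}, (f x - c x) ∂μ := by
  rw [← setIntegral_congr_set
    (setOf_exists_birkhoffSum_sub_pos_ae_eq hT.quasiMeasurePreserving hcT)]
  exact setIntegral_exists_birkhoffSum_pos_nonneg hT (hf.sub hc)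

end Invariant

section Truncation

variable {X : Type*}

lemma monotone_setOf_exists_max_neg_lt (c : X → ℝ) (A : ℕ → X → ℝ) :
    Monotone fun M : ℕ => {x | ∃ k, 1 ≤ k ∧ max (c x) (-M) < A k x} :=
  fun _ _ hMN _ ⟨k, hk, hlt⟩ => ⟨k, hk, lt_of_le_of_lt (by gcongr) hlt⟩

lemma iUnion_setOf_exists_max_neg_lt (c : X → ℝ) (A : ℕ → X → ℝ) :
    ⋃ M : ℕ, {x | ∃ k, 1 ≤ k ∧ max (c x) (-M) < A k x} = {x | ∃ k, 1 ≤ k ∧ c x < A k x} := by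
  ext x
  simp only [mem_iUnion, mem_ofPred]
  constructor
  · rintro ⟨M, k, hk, hlt⟩
    exact ⟨k, hk, (le_max_left _ _).trans_lt hlt⟩
  · rintro ⟨k, hk, hlt⟩
    obtain ⟨M, hM⟩ := exists_nat_ge (-c x)
    exact ⟨M, k, hk, by rwa [max_eq_left (by linarith)]⟩

variable [MeasurableSpace X] {μ : Measure X}

lemma lintegral_ofReal_sub_le_of_integral_sub_nonneg {f c d : X → ℝ}
    (hfc : Integrable (fun x => f x - c x) μ) (h : 0 ≤ ∫ x, (f x - c x) ∂μ)
    (hdc : ∀ x, d x ≤ c x) :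
    ∫⁻ x, ENNReal.ofReal (d x - f x) ∂μ ≤ ∫⁻ x, ENNReal.ofReal (f x - d x) ∂μ := by
  rw [integral_eq_lintegral_pos_part_sub_lintegral_neg_part hfc, sub_nonneg] at h
  calc ∫⁻ x, ENNReal.ofReal (d x - f x) ∂μ
      ≤ ∫⁻ x, ENNReal.ofReal (-(f x - c x)) ∂μ :=
        lintegral_mono fun x => ENNReal.ofReal_le_ofReal (by linarith [hdc x])
    _ ≤ ∫⁻ x, ENNReal.ofReal (f x - c x) ∂μ :=
        (ENNReal.toReal_le_toReal ((lintegral_ofReal_le_lintegral_enorm _).trans_lt hfc.neg.2).ne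
          ((lintegral_ofReal_le_lintegral_enorm _).trans_lt hfc.2).ne).mp h
    _ ≤ ∫⁻ x, ENNReal.ofReal (f x - d x) ∂μ :=
        lintegral_mono fun x => ENNReal.ofReal_le_ofReal (by linarith [hdc x])

lemma integrable_max_const_of_integrable_max_zero [IsFiniteMeasure μ] {c : X → ℝ}
    (hc : AEStronglyMeasurable c μ) (hc_pos : Integrable (fun x => max (c x) 0) μ) (a : ℝ) :
    Integrable (fun x => max (c x) a) μ := by
  refine (hc_pos.add (integrable_const |a|)).mono' (hc.sup aestronglyMeasurable_const)
    (ae_of_all _ fun x => ?_)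
  simp only [Real.norm_eq_abs, Pi.add_apply]
  refine abs_le.2 ⟨?_, max_le ?_ ?_⟩
  · linarith [le_max_right (c x) a, neg_abs_le a, le_max_right (c x) 0]
  · linarith [le_max_left (c x) 0, abs_nonneg a]
  · linarith [le_abs_self a, le_max_right (c x) 0]

end Truncation

/-- **Maximal Ergodic Theorem with invariant function λ.**
If `T` preserves the probability measure `μ`, `f ∈ L¹(μ)`, and `lam` is a measurable
`T`-invariant function with integrable positive part, then
`∫_{f* > lam} (f - lam) dμ ≥ 0`, where `f* = sup_{k ≥ 1} A_k f` and
`A_k f = (1/k) ∑_{j<k} f ∘ T^j`.  The integral is interpreted with the convention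
`∫ (f - lam)⁺ ≥ ∫ (f - lam)⁻` over the set (so the value `+∞` is allowed). -/
theorem maximal_ergodic_theorem_invariant_lambda
    {X : Type*} [MeasurableSpace X] (μ : Measure X) [IsProbabilityMeasure μ]
    (T : X → X) (hT : MeasurePreserving T μ μ)
    (f : X → ℝ) (hf : Integrable f μ)
    (lam : X → ℝ) (hlam_meas : Measurable lam)
    (hinv : lam ∘ T =ᵐ[μ] lam)
    (hlam_pos : Integrable (fun x => max (lam x) 0) μ) :
    ∫⁻ x in {x | ∃ k : ℕ, 1 ≤ k ∧ lam x < birkhoffAverage ℝ T f k x},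
        ENNReal.ofReal (lam x - f x) ∂μ
      ≤ ∫⁻ x in {x | ∃ k : ℕ, 1 ≤ k ∧ lam x < birkhoffAverage ℝ T f k x},
        ENNReal.ofReal (f x - lam x) ∂μ := by
  have h_dir := (monotone_setOf_exists_max_neg_lt lam (birkhoffAverage ℝ T f)).directed_le
  rw [← iUnion_setOf_exists_max_neg_lt, setLIntegral_iUnion_of_directed _ h_dir,
    setLIntegral_iUnion_of_directed _ h_dir]
  refine iSup_mono fun M => ?_
  have hc : Integrable (fun x => max (lam x) (-M)) μ :=
    integrable_max_const_of_integrable_max_zero hlam_meas.aestronglyMeasurable hlam_pos _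
  have hcT : (fun x => max (lam x) (-M)) ∘ T =ᵐ[μ] fun x => max (lam x) (-M) :=
    hinv.fun_comp fun y => max y (-M)
  exact lintegral_ofReal_sub_le_of_integral_sub_nonneg (hf.sub hc).integrableOn
    (setIntegral_sub_nonneg_of_comp_ae_eq hT hf hc hcT) fun x => le_max_left _ _
end

section
/- Let (X, ℬ, μ) be a probability space, T : X → X a measure-preserving transformation, and f ∈ L¹(μ). Then ∫_{{f* > 0}} f dμ ≥ 0, where f* = sup_{k≥1} A_k f is the maximal function of f. -/
open MeasureTheory Filter

namespace MaxErgAux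

variable {X : Type*} [MeasurableSpace X]

/-- Maximum of the first `n` Birkhoff sums (with `S 0 = 0`). -/
noncomputable def M (T : X → X) (g : X → ℝ) : ℕ → X → ℝ
  | 0 => fun _ => 0
  | n + 1 => fun x => max (M T g n x) (birkhoffSum T g (n + 1) x)

variable {T : X → X} {g : X → ℝ}

lemma M_nonneg : ∀ n x, 0 ≤ M T g n x
  | 0, _ => le_refl 0
  | n + 1, x => le_trans (M_nonneg n x) (le_max_left _ _)

lemma M_mono_succ (n : ℕ) (x : X) : M T g n x ≤ M T g (n + 1) x :=
  le_max_left _ _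

lemma sum_le_M : ∀ n k, k ≤ n → ∀ x, birkhoffSum T g k x ≤ M T g n x
  | 0, k, hk, x => by
      interval_cases k
      simp [M, birkhoffSum]
  | n + 1, k, hk, x => by
      rcases Nat.lt_or_ge k (n + 1) with h | h
      · exact le_trans (sum_le_M n k (Nat.lt_succ_iff.mp h) x) (M_mono_succ n x)
      · have : k = n + 1 := le_antisymm hk h
        subst this
        exact le_max_right _ _

lemma key : ∀ n x, 0 < M T g n x → M T g n x ≤ g x + M T g n (T x)
  | 0, x, h => absurd h (by simp [M])
  | n + 1, x, h => by
      rcases le_total (M T g n x) (birkhoffSum T g (n + 1) x) with hle | hle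
      · have hmax : M T g (n + 1) x = birkhoffSum T g (n + 1) x := max_eq_right hle
        rw [hmax, birkhoffSum_succ' T g n x]
        have h4 := sum_le_M (T := T) (g := g) (n + 1) n (Nat.le_succ n) (T x)
        linarith [h4]
      · have hmax : M T g (n + 1) x = M T g n x := max_eq_left hle
        rw [hmax] at h ⊢
        have := key n x h
        have := M_mono_succ (T := T) (g := g) n (T x)
        linarith

lemma pos_M_exists : ∀ n x, 0 < M T g n x → ∃ k, 1 ≤ k ∧ 0 < birkhoffSum T g k x
  | 0, x, h => absurd h (by simp [M])
  | n + 1, x, h => by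
      rcases lt_max_iff.mp h with h' | h'
      · exact pos_M_exists n x h'
      · exact ⟨n + 1, Nat.succ_le_succ (Nat.zero_le n), h'⟩

lemma measurable_S (hT : Measurable T) (hg : Measurable g) (k : ℕ) :
    Measurable (fun x => birkhoffSum T g k x) := by
  unfold birkhoffSum
  exact Finset.measurable_sum _ fun i _ => hg.comp (hT.iterate i)

lemma measurable_M (hT : Measurable T) (hg : Measurable g) : ∀ n, Measurable (M T g n)
  | 0 => measurable_const
  | n + 1 => (measurable_M hT hg n).max (measurable_S hT hg (n + 1))

lemma integrable_S {μ : Measure X} (hT : MeasurePreserving T μ μ) (hgi : Integrable g μ)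
    (k : ℕ) : Integrable (fun x => birkhoffSum T g k x) μ := by
  unfold birkhoffSum
  apply integrable_finset_sum
  intro i _
  exact ((hT.iterate i).integrable_comp hgi.aestronglyMeasurable).mpr hgi

lemma integrable_M {μ : Measure X} (hT : MeasurePreserving T μ μ) (hgi : Integrable g μ) :
    ∀ n, Integrable (M T g n) μ
  | 0 => integrable_zero X ℝ μ
  | n + 1 => (integrable_M hT hgi n).sup (integrable_S hT hgi (n + 1))

/-- Garsia's inequality: the integral of `g` over `{M n > 0}` is nonnegative. -/
lemma int_En_nonneg {μ : Measure X} (hT : MeasurePreserving T μ μ) (hg : Measurable g)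
    (hgi : Integrable g μ) (n : ℕ) :
    0 ≤ ∫ x in {x | 0 < M T g n x}, g x ∂μ := by
  set E : Set X := {x | 0 < M T g n x} with hE_def
  have hE : MeasurableSet E := measurableSet_lt measurable_const (measurable_M hT.measurable hg n)
  have hM : Integrable (M T g n) μ := integrable_M hT hgi n
  have hMT : Integrable (fun x => M T g n (T x)) μ :=
    (hT.integrable_comp hM.aestronglyMeasurable).mpr hM
  set φ : X → ℝ := fun x => M T g n x - M T g n (T x) with hφ_def
  have hφi : Integrable φ μ := hM.sub hMT
  -- total integral of φ is zero
  have hintT : ∫ x, M T g n (T x) ∂μ = ∫ x, M T g n x ∂μ := by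
    rw [← integral_map hT.measurable.aemeasurable
      (hT.map_eq.symm ▸ hM.aestronglyMeasurable), hT.map_eq]
  have hφ0 : ∫ x, φ x ∂μ = 0 := by
    rw [hφ_def]
    rw [integral_sub hM hMT, hintT, sub_self]
  -- integral of φ over Eᶜ is nonpositive
  have hcompl : ∫ x in Eᶜ, φ x ∂μ ≤ 0 := by
    apply setIntegral_nonpos hE.compl
    intro x hx
    have h1 : ¬ (0 < M T g n x) := hx
    have h2 : 0 ≤ M T g n x := M_nonneg n x
    have h3 : 0 ≤ M T g n (T x) := M_nonneg n (T x)
    simp only [hφ_def]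
    have : M T g n x = 0 := le_antisymm (not_lt.mp h1) h2
    linarith
  have hsplit : ∫ x in E, φ x ∂μ + ∫ x in Eᶜ, φ x ∂μ = ∫ x, φ x ∂μ :=
    integral_add_compl hE hφi
  have hEφ : 0 ≤ ∫ x in E, φ x ∂μ := by linarith [hsplit, hφ0, hcompl]
  have hmono : ∫ x in E, φ x ∂μ ≤ ∫ x in E, g x ∂μ := by
    apply setIntegral_mono_on hφi.integrableOn hgi.integrableOn hE
    intro x hx
    have := key n x hx
    simp only [hφ_def]
    linarith
  linarith

end MaxErgAux

open MaxErgAux in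
/-- **Maximal Ergodic Theorem, level 0.**
If `T` preserves the probability measure `μ` and `f ∈ L¹(μ)`, then
`∫_{f* > 0} f dμ ≥ 0`, where `f* = sup_{k ≥ 1} A_k f` is the maximal function,
with `A_k f = (1/k) ∑_{j<k} f ∘ T^j`. -/
theorem maximal_ergodic_theorem_zero
    {X : Type*} [MeasurableSpace X] (μ : Measure X) [IsProbabilityMeasure μ]
    (T : X → X) (hT : MeasurePreserving T μ μ)
    (f : X → ℝ) (hf : Integrable f μ) :
    0 ≤ ∫ x in {x | ∃ k : ℕ, 1 ≤ k ∧ 0 < birkhoffAverage ℝ T f k x}, f x ∂μ := by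
  -- replace f by a measurable representative g
  set g : X → ℝ := hf.1.mk f with hg_def
  have hg : Measurable g := hf.1.measurable_mk
  have hfg : f =ᵐ[μ] g := hf.1.ae_eq_mk
  have hgi : Integrable g μ := hf.congr hfg
  -- the positivity sets for f and g agree a.e.
  have hiter : ∀ j : ℕ, (fun x => f (T^[j] x)) =ᵐ[μ] fun x => g (T^[j] x) := fun j =>
    (hT.iterate j).quasiMeasurePreserving.ae_eq_comp hfg
  have hall : ∀ᵐ x ∂μ, ∀ j : ℕ, f (T^[j] x) = g (T^[j] x) := ae_all_iff.mpr hiter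
  have hsets : {x | ∃ k : ℕ, 1 ≤ k ∧ 0 < birkhoffAverage ℝ T f k x}
      =ᵐ[μ] {x | ∃ k : ℕ, 1 ≤ k ∧ 0 < birkhoffAverage ℝ T g k x} := by
    filter_upwards [hall] with x hx
    have hsum : ∀ k : ℕ, birkhoffAverage ℝ T f k x = birkhoffAverage ℝ T g k x := by
      intro k
      unfold birkhoffAverage birkhoffSum
      congr 1
      exact Finset.sum_congr rfl fun i _ => hx i
    simp only [Set.mem_setOf_eq, eq_iff_iff]
    constructor
    · rintro ⟨k, hk1, hk2⟩; exact ⟨k, hk1, by rw [hsum k] at hk2; exact hk2⟩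
    · rintro ⟨k, hk1, hk2⟩; exact ⟨k, hk1, by rw [hsum k]; exact hk2⟩
  rw [setIntegral_congr_set hsets,
    integral_congr_ae (ae_restrict_of_ae hfg)]
  -- now everything about g; identify the set with ⋃ n {M n > 0}
  set E : ℕ → Set X := fun n => {x | 0 < M T g n x} with hE_def
  have hEm : ∀ n, MeasurableSet (E n) := fun n =>
    measurableSet_lt measurable_const (measurable_M hT.measurable hg n)
  have hEmono : Monotone E := by
    apply monotone_nat_of_le_succ
    intro n x hx
    exact lt_of_lt_of_le hx (M_mono_succ n x)
  have hunion : (⋃ n, E n) = {x | ∃ k : ℕ, 1 ≤ k ∧ 0 < birkhoffAverage ℝ T g k x} := by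
    ext x
    simp only [Set.mem_iUnion, Set.mem_setOf_eq, hE_def]
    constructor
    · rintro ⟨n, hn⟩
      obtain ⟨k, hk1, hk2⟩ := pos_M_exists n x hn
      refine ⟨k, hk1, ?_⟩
      unfold birkhoffAverage
      have hkpos : (0 : ℝ) < (k : ℝ)⁻¹ := by positivity
      exact smul_pos hkpos hk2
    · rintro ⟨k, hk1, hk2⟩
      refine ⟨k, ?_⟩
      have hkpos : (0 : ℝ) < (k : ℝ)⁻¹ := by positivity
      have hS : 0 < birkhoffSum T g k x := by
        by_contra hS
        push_neg at hS
        have : (k : ℝ)⁻¹ • birkhoffSum T g k x ≤ 0 := smul_nonpos_of_nonneg_of_nonpos hkpos.le hS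
        unfold birkhoffAverage at hk2
        linarith
      exact lt_of_lt_of_le hS (sum_le_M k k le_rfl x)
  rw [← hunion]
  have htend := tendsto_setIntegral_of_monotone hEm hEmono (hgi.integrableOn)
  exact ge_of_tendsto' htend fun n => int_En_nonneg hT hg hgi n
end

section
/- (Pointwise Ergodic Theorem) Let (X, ℬ, μ) be a probability space, T : X → X a measure-preserving transformation, and f ∈ L¹(μ). Then the sequence of Birkhoff averages A_k f = (1/k) Σ_{j=0}^{k−1} f∘T^j converges μ-almost everywhere (to a finite limit) as k → ∞. -/
/-!
Garsia's maximal inequality `0 ≤ ∫_{M_N > 0} g` for the maximal Birkhoff sum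
`M_N = max (0, S₁ g, …, S_N g)` passes to the limit `N → ∞` on every `T`-invariant set `E` on which
the Birkhoff sums of `g` are unbounded above, giving `0 ≤ ∫_E g`. Since `r < limsup A_k f` forces
the sums of `f - r` to be unbounded above, the invariant set where the averages oscillate across a
rational gap `q < r` carries nonnegative integrals of both `f - r` and `q - f`, whose sum is the
negative constant `q - r`; so it is null. Similarly, on the invariant set `E` where the sums of
`f - m` are unbounded for every `m`, `m μ(E) ≤ ∫_E f` for all `m`, so `E` is null and the averages
stay bounded almost everywhere.
-/

open MeasureTheory Filter Set Topology

section RealSequence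

variable {u : ℕ → ℝ}

lemma limsup_le_of_bddAbove_mul_sub {r : ℝ} (h : BddAbove (range fun n : ℕ => n * (u n - r))) :
    limsup (fun n => (u n : EReal)) atTop ≤ r := by
  obtain ⟨M, hM⟩ := h
  have hlim : Tendsto (fun n : ℕ => ((r + M / n : ℝ) : EReal)) atTop (𝓝 r) := by
    rw [EReal.tendsto_coe]
    simpa using tendsto_const_nhds.add (tendsto_const_div_atTop_nhds_zero_nat M)
  calc limsup (fun n => (u n : EReal)) atTop
      ≤ limsup (fun n : ℕ => ((r + M / n : ℝ) : EReal)) atTop := by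
        refine limsup_le_limsup ?_
        filter_upwards [eventually_gt_atTop 0] with n hn
        have hn' : (0 : ℝ) < n := by exact_mod_cast hn
        rw [EReal.coe_le_coe_iff, ← sub_le_iff_le_add', le_div_iff₀ hn']
        linarith [hM ⟨n, rfl⟩]
    _ = r := hlim.limsup_eq

lemma le_liminf_of_bddAbove_mul_sub {q : ℝ} (h : BddAbove (range fun n : ℕ => n * (q - u n))) :
    q ≤ liminf (fun n => (u n : EReal)) atTop := by
  have := limsup_le_of_bddAbove_mul_sub (u := fun n => -u n) (r := -q)
    (by simpa [neg_add_eq_sub] using h)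
  rwa [show (fun n => ((-u n : ℝ) : EReal)) = -fun n => (u n : EReal) from rfl,
    EReal.limsup_neg, EReal.coe_neg, EReal.neg_le_neg_iff] at this

lemma exists_tendsto_of_bddAbove_mul_sub
    (hsup : ∃ r : ℝ, BddAbove (range fun n : ℕ => n * (u n - r)))
    (hinf : ∃ q : ℝ, BddAbove (range fun n : ℕ => n * (q - u n)))
    (hcross : ∀ q r : ℚ, q < r →
      BddAbove (range fun n : ℕ => n * (u n - r)) ∨ BddAbove (range fun n : ℕ => n * (q - u n))) :
    ∃ L, Tendsto u atTop (𝓝 L) := by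
  have heq : liminf (fun n => (u n : EReal)) atTop = limsup (fun n => (u n : EReal)) atTop := by
    refine le_antisymm liminf_le_limsup (not_lt.1 fun hlt => ?_)
    obtain ⟨q, hq, hqls⟩ := EReal.exists_rat_btwn_of_lt hlt
    obtain ⟨r, hqr, hr⟩ := EReal.exists_rat_btwn_of_lt hqls
    rcases hcross q r (by exact_mod_cast hqr) with h | h
    · exact (limsup_le_of_bddAbove_mul_sub h).not_gt hr
    · exact (le_liminf_of_bddAbove_mul_sub h).not_gt hq
  obtain ⟨r, hr⟩ := hsup
  obtain ⟨q, hq⟩ := hinf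
  have hne_top := ((limsup_le_of_bddAbove_mul_sub hr).trans_lt (EReal.coe_lt_top r)).ne
  have hne_bot := (heq ▸ (EReal.bot_lt_coe q).trans_le (le_liminf_of_bddAbove_mul_sub hq)).ne'
  have hL := (EReal.coe_toReal hne_top hne_bot).symm
  exact ⟨_, EReal.tendsto_coe.1 (tendsto_of_liminf_eq_limsup (heq.trans hL) hL)⟩

end RealSequence

section Birkhoff

variable {X : Type*} {T : X → X} {g : X → ℝ}

/-- `birkhoffMax T g N x = max (0, S₁ x, …, S_N x)` where `S_n = birkhoffSum T g n`. -/
noncomputable def birkhoffMax (T : X → X) (g : X → ℝ) : ℕ → X → ℝ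
  | 0 => 0
  | N + 1 => fun x => max 0 (g x + birkhoffMax T g N (T x))

lemma birkhoffMax_nonneg : ∀ N x, 0 ≤ birkhoffMax T g N x
  | 0, _ => le_rfl
  | _ + 1, _ => le_max_left _ _

lemma birkhoffMax_le_succ (N : ℕ) (x : X) : birkhoffMax T g N x ≤ birkhoffMax T g (N + 1) x := by
  induction N generalizing x with
  | zero => exact birkhoffMax_nonneg 1 x
  | succ N ih => exact max_le_max le_rfl (add_le_add le_rfl (ih (T x)))

lemma monotone_birkhoffMax (x : X) : Monotone fun N => birkhoffMax T g N x :=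
  monotone_nat_of_le_succ fun N => birkhoffMax_le_succ N x

lemma birkhoffSum_le_birkhoffMax (n : ℕ) (x : X) : birkhoffSum T g n x ≤ birkhoffMax T g n x := by
  induction n generalizing x with
  | zero => simp [birkhoffMax]
  | succ n ih =>
    rw [birkhoffSum_succ']
    exact le_max_of_le_right (add_le_add le_rfl (ih (T x)))

lemma birkhoffMax_sub_birkhoffMax_comp_le {N : ℕ} {x : X} (hx : 0 < birkhoffMax T g N x) :
    birkhoffMax T g N x - birkhoffMax T g N (T x) ≤ g x := by
  cases N with
  | zero => exact absurd hx (lt_irrefl 0)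
  | succ N =>
    have hmax : birkhoffMax T g (N + 1) x = g x + birkhoffMax T g N (T x) :=
      max_eq_right ((lt_max_iff.1 hx).resolve_left (lt_irrefl 0)).le
    linarith [birkhoffMax_le_succ (T := T) (g := g) N (T x)]

def unboundedBirkhoffSums (T : X → X) (g : X → ℝ) : Set X :=
  {x | ¬BddAbove (range fun n => birkhoffSum T g n x)}

lemma preimage_unboundedBirkhoffSums :
    T ⁻¹' unboundedBirkhoffSums T g = unboundedBirkhoffSums T g := by
  ext x
  simp only [unboundedBirkhoffSums, mem_preimage, mem_ofPred_eq, not_iff_not]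
  constructor
  · rintro ⟨M, hM⟩
    refine ⟨max 0 (g x + M), ?_⟩
    rintro _ ⟨_ | n, rfl⟩
    · simp
    · show birkhoffSum T g (n + 1) x ≤ _
      rw [birkhoffSum_succ']
      exact le_max_of_le_right (add_le_add le_rfl (hM ⟨n, rfl⟩))
  · rintro ⟨M, hM⟩
    refine ⟨M - g x, ?_⟩
    rintro _ ⟨n, rfl⟩
    have : birkhoffSum T g (n + 1) x ≤ M := hM ⟨n + 1, rfl⟩
    rw [birkhoffSum_succ'] at this
    exact le_sub_iff_add_le'.2 this

lemma birkhoffSum_sub_const_apply (f : X → ℝ) (r : ℝ) (n : ℕ) (x : X) :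
    birkhoffSum T (fun y => f y - r) n x = n * (birkhoffAverage ℝ T f n x - r) := by
  rcases eq_or_ne n 0 with rfl | hn
  · simp
  · simp [birkhoffAverage, birkhoffSum, Finset.sum_sub_distrib, mul_sub, hn]

lemma birkhoffSum_const_sub_apply (f : X → ℝ) (q : ℝ) (n : ℕ) (x : X) :
    birkhoffSum T (fun y => q - f y) n x = n * (q - birkhoffAverage ℝ T f n x) := by
  rcases eq_or_ne n 0 with rfl | hn
  · simp
  · simp [birkhoffAverage, birkhoffSum, Finset.sum_sub_distrib, mul_sub, hn]

variable [MeasurableSpace X] {μ : Measure X} {f : X → ℝ}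

lemma measurable_birkhoffMax (hT : Measurable T) (hg : Measurable g) :
    ∀ N, Measurable (birkhoffMax T g N)
  | 0 => measurable_const
  | N + 1 => measurable_const.max (hg.add ((measurable_birkhoffMax hT hg N).comp hT))

lemma integrable_birkhoffMax (hT : MeasurePreserving T μ μ) (hg : Integrable g μ) :
    ∀ N, Integrable (birkhoffMax T g N) μ
  | 0 => integrable_zero _ _ _
  | N + 1 => (integrable_zero _ _ _).sup
      (hg.add (hT.integrable_comp_of_integrable (integrable_birkhoffMax hT hg N)))

theorem maximal_ergodic_inequality (hT : MeasurePreserving T μ μ) (hgm : Measurable g)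
    (hg : Integrable g μ) (N : ℕ) : 0 ≤ ∫ x in {x | 0 < birkhoffMax T g N x}, g x ∂μ := by
  set M := birkhoffMax T g N
  set E := {x | 0 < M x}
  have hM : Integrable M μ := integrable_birkhoffMax hT hg N
  have hMT : Integrable (M ∘ T) μ := hT.integrable_comp_of_integrable hM
  have hE : MeasurableSet E :=
    measurableSet_lt measurable_const (measurable_birkhoffMax hT.measurable hgm N)
  have hinv : ∫ x, M (T x) ∂μ = ∫ x, M x ∂μ := by
    rw [← integral_map hT.aemeasurable (by rw [hT.map_eq]; exact hM.aestronglyMeasurable),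
      hT.map_eq]
  -- `M` vanishes off `E` and `M ∘ T ≥ 0`
  calc 0 = ∫ x, M x ∂μ - ∫ x, M (T x) ∂μ := by rw [hinv, sub_self]
    _ ≤ ∫ x in E, M x ∂μ - ∫ x in E, M (T x) ∂μ := by
      rw [setIntegral_eq_integral_of_forall_compl_eq_zero (s := E) (f := M) fun x hx =>
        (not_lt.1 hx).antisymm (birkhoffMax_nonneg N x)]
      exact sub_le_sub_left (setIntegral_le_integral hMT
        (ae_of_all _ fun x => birkhoffMax_nonneg N (T x))) _
    _ = ∫ x in E, (M x - M (T x)) ∂μ := (integral_sub hM.integrableOn hMT.integrableOn).symm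
    _ ≤ ∫ x in E, g x ∂μ := setIntegral_mono_on (hM.sub hMT).integrableOn hg.integrableOn hE
      fun _ hx => birkhoffMax_sub_birkhoffMax_comp_le hx

lemma measurableSet_unboundedBirkhoffSums (hT : Measurable T) (hg : Measurable g) :
    MeasurableSet (unboundedBirkhoffSums T g) :=
  (measurableSet_bddAbove_range fun _ =>
    Finset.measurable_sum _ fun i _ => hg.comp (hT.iterate i)).compl

theorem setIntegral_nonneg_of_subset_unboundedBirkhoffSums (hT : MeasurePreserving T μ μ)
    (hgm : Measurable g) (hg : Integrable g μ) {E : Set X} (hE : MeasurableSet E)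
    (hTE : T ⁻¹' E = E) (hsub : E ⊆ unboundedBirkhoffSums T g) : 0 ≤ ∫ x in E, g x ∂μ := by
  have hTE' : MeasurePreserving T (μ.restrict E) (μ.restrict E) := by
    simpa only [hTE] using hT.restrict_preimage hE
  set s := fun N => {x | 0 < birkhoffMax T g N x} ∩ E
  have hs : ∀ N, MeasurableSet (s N) := fun N =>
    (measurableSet_lt measurable_const (measurable_birkhoffMax hT.measurable hgm N)).inter hE
  have hmono : Monotone s := fun m n hmn =>
    inter_subset_inter_left _ fun x hx => hx.trans_le (monotone_birkhoffMax x hmn)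
  have hunion : ⋃ N, s N = E := by
    refine subset_antisymm (iUnion_subset fun _ => inter_subset_right) fun x hx => ?_
    obtain ⟨_, ⟨n, rfl⟩, hn⟩ := not_bddAbove_iff.1 (hsub hx) 0
    exact mem_iUnion.2 ⟨n, hn.trans_le (birkhoffSum_le_birkhoffMax n x), hx⟩
  have hlim := tendsto_setIntegral_of_monotone hs hmono hg.integrableOn
  rw [hunion] at hlim
  refine ge_of_tendsto' hlim fun N => ?_
  rw [← Measure.restrict_restrict
    (measurableSet_lt measurable_const (measurable_birkhoffMax hT.measurable hgm N))]
  exact maximal_ergodic_inequality hTE' hgm hg.restrict N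

lemma measure_unboundedBirkhoffSums_sub_inter_const_sub_eq_zero [IsFiniteMeasure μ]
    (hT : MeasurePreserving T μ μ) (hfm : Measurable f) (hf : Integrable f μ) {q r : ℝ}
    (hqr : q < r) :
    μ (unboundedBirkhoffSums T (fun x => f x - r) ∩
      unboundedBirkhoffSums T (fun x => q - f x)) = 0 := by
  set E := unboundedBirkhoffSums T (fun x => f x - r) ∩ unboundedBirkhoffSums T (fun x => q - f x)
  have hE : MeasurableSet E :=
    (measurableSet_unboundedBirkhoffSums hT.measurable (hfm.sub measurable_const)).inter
      (measurableSet_unboundedBirkhoffSums hT.measurable (measurable_const.sub hfm))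
  have hTE : T ⁻¹' E = E := by simp only [E, preimage_inter, preimage_unboundedBirkhoffSums]
  have hi₁ : Integrable (fun x => f x - r) μ := hf.sub (integrable_const r)
  have hi₂ : Integrable (fun x => q - f x) μ := (integrable_const q).sub hf
  have h₁ : 0 ≤ ∫ x in E, (f x - r) ∂μ := setIntegral_nonneg_of_subset_unboundedBirkhoffSums hT
    (hfm.sub measurable_const) hi₁ hE hTE inter_subset_left
  have h₂ : 0 ≤ ∫ x in E, (q - f x) ∂μ := setIntegral_nonneg_of_subset_unboundedBirkhoffSums hT
    (measurable_const.sub hfm) hi₂ hE hTE inter_subset_right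
  have hsum : ∫ x in E, (f x - r) ∂μ + ∫ x in E, (q - f x) ∂μ = μ.real E * (q - r) := by
    rw [← integral_add hi₁.integrableOn hi₂.integrableOn, ← smul_eq_mul, ← setIntegral_const]
    congr 1 with x
    ring
  have : μ.real E ≤ 0 := nonpos_of_mul_nonneg_left (hsum ▸ add_nonneg h₁ h₂) (sub_neg.2 hqr)
  exact (measureReal_eq_zero_iff).1 (this.antisymm measureReal_nonneg)

lemma measure_iInter_unboundedBirkhoffSums_sub_natCast_eq_zero [IsFiniteMeasure μ]
    (hT : MeasurePreserving T μ μ) (hfm : Measurable f) (hf : Integrable f μ) :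
    μ (⋂ m : ℕ, unboundedBirkhoffSums T (fun x => f x - m)) = 0 := by
  set E := ⋂ m : ℕ, unboundedBirkhoffSums T (fun x => f x - m)
  have hE : MeasurableSet E := MeasurableSet.iInter fun m =>
    measurableSet_unboundedBirkhoffSums hT.measurable (hfm.sub measurable_const)
  have hTE : T ⁻¹' E = E := by simp only [E, preimage_iInter, preimage_unboundedBirkhoffSums]
  have hbound : ∀ m : ℕ, m * μ.real E ≤ ∫ x in E, f x ∂μ := fun m => by
    have : 0 ≤ ∫ x in E, (f x - m) ∂μ := setIntegral_nonneg_of_subset_unboundedBirkhoffSums hT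
      (hfm.sub measurable_const) (hf.sub (integrable_const _)) hE hTE (iInter_subset _ m)
    rw [integral_sub hf.integrableOn (integrable_const _).integrableOn, setIntegral_const,
      smul_eq_mul] at this
    linarith
  have : μ.real E ≤ 0 := by
    by_contra! hpos
    obtain ⟨m, hm⟩ := exists_nat_gt ((∫ x in E, f x ∂μ) / μ.real E)
    rw [div_lt_iff₀ hpos] at hm
    linarith [hbound m]
  exact (measureReal_eq_zero_iff).1 (this.antisymm measureReal_nonneg)

theorem ae_exists_tendsto_birkhoffAverage_of_measurable [IsFiniteMeasure μ]
    (hT : MeasurePreserving T μ μ) (hfm : Measurable f) (hf : Integrable f μ) :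
    ∀ᵐ x ∂μ, ∃ L : ℝ, Tendsto (fun k => birkhoffAverage ℝ T f k x) atTop (𝓝 L) := by
  have hsup := measure_eq_zero_iff_ae_notMem.1
    (measure_iInter_unboundedBirkhoffSums_sub_natCast_eq_zero hT hfm hf)
  have hinf := measure_eq_zero_iff_ae_notMem.1
    (measure_iInter_unboundedBirkhoffSums_sub_natCast_eq_zero hT hfm.neg hf.neg)
  have hcross : ∀ᵐ x ∂μ, ∀ q r : ℚ, q < r → x ∉
      unboundedBirkhoffSums T (fun y => f y - r) ∩ unboundedBirkhoffSums T (fun y => q - f y) := by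
    simp only [ae_all_iff]
    intro q r hqr
    exact measure_eq_zero_iff_ae_notMem.1
      (measure_unboundedBirkhoffSums_sub_inter_const_sub_eq_zero hT hfm hf
        (by exact_mod_cast hqr))
  filter_upwards [hsup, hinf, hcross] with x hxsup hxinf hxcross
  simp only [unboundedBirkhoffSums, mem_iInter, mem_inter_iff, mem_ofPred_eq, not_forall,
    not_and_or, not_not, birkhoffSum_sub_const_apply, birkhoffSum_const_sub_apply,
    birkhoffAverage_neg] at hxsup hxinf hxcross
  obtain ⟨m, hm⟩ := hxsup
  obtain ⟨m', hm'⟩ := hxinf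
  refine exists_tendsto_of_bddAbove_mul_sub ⟨m, hm⟩ ⟨-m', ?_⟩ hxcross
  simpa only [Pi.neg_apply, neg_sub_comm] using hm'

end Birkhoff

/-- **Pointwise (Birkhoff) Ergodic Theorem.**
If `T` preserves the probability measure `μ` and `f ∈ L¹(μ)`, then the Birkhoff
averages `A_k f = (1/k) ∑_{j<k} f ∘ T^j` converge `μ`-a.e. to a finite limit. -/
theorem pointwise_ergodic_theorem
    {X : Type*} [MeasurableSpace X] (μ : Measure X) [IsProbabilityMeasure μ]
    (T : X → X) (hT : MeasurePreserving T μ μ)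
    (f : X → ℝ) (hf : Integrable f μ) :
    ∀ᵐ x ∂μ, ∃ L : ℝ,
      Tendsto (fun k => birkhoffAverage ℝ T f k x) atTop (nhds L) := by
  set f' := hf.1.mk f
  have hA : ∀ᵐ x ∂μ, ∀ k, birkhoffAverage ℝ T f k x = birkhoffAverage ℝ T f' k x :=
    ae_all_iff.2 fun k =>
      hT.quasiMeasurePreserving.birkhoffAverage_ae_eq_of_ae_eq ℝ hf.1.ae_eq_mk k
  filter_upwards [ae_exists_tendsto_birkhoffAverage_of_measurable hT
    hf.1.stronglyMeasurable_mk.measurable (hf.congr hf.1.ae_eq_mk), hA] with x ⟨L, hL⟩ hx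
  exact ⟨L, by simpa only [hx] using hL⟩
end
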